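/- Let p be a prime with p ≡ 23 (mod 24) which is supersingular for the elliptic curve E: y² = x³ − 8x² − 2x, i.e., #{(x,y) ∈ 𝔽_p² : y² = x³ − 8x² − 2x} = p. Then the genus-2 curve C: y² = x(x² − 4)(x² − 1) satisfies #{(x,y) ∈ 𝔽_p² : y² = x(x² − 4)(x² − 1)} = p; equivalently, the smooth projective model of C (which has a single point at infinity) has exactly p + 1 points over 𝔽_p. -/
import Mathlib


/-- If `p ≡ 23 (mod 24)` is a supersingular prime for the elliptic curve
`E : y² = x³ − 8x² − 2x` (i.e. `E` has exactly `p` affine points over `𝔽_p`),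
then the genus-2 curve `C : y² = x(x² − 4)(x² − 1)` has exactly `p` affine
points over `𝔽_p` (equivalently, its smooth projective model, which has a
single point at infinity, has exactly `p + 1` points over `𝔽_p`). -/
theorem genus_two_point_count_supersingular (p : ℕ) (hp : p.Prime)
    (hp24 : p % 24 = 23)
    (hss : {q : ZMod p × ZMod p |
      q.2 ^ 2 = q.1 ^ 3 - 8 * q.1 ^ 2 - 2 * q.1}.ncard = p) :
    {q : ZMod p × ZMod p |
      q.2 ^ 2 = q.1 * (q.1 ^ 2 - 4) * (q.1 ^ 2 - 1)}.ncard = p := by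
  classical
  haveI : Fact p.Prime := ⟨hp⟩
  have hchar : ringChar (ZMod p) ≠ 2 := by
    rw [ZMod.ringChar_zmod_n]; omega
  set χ := quadraticChar (ZMod p) with hχ
  set F : ZMod p → ZMod p := fun x => x * (x ^ 2 - 4) * (x ^ 2 - 1) with hF
  have hneg1 : χ (-1) = -1 := by
    rw [hχ]
    apply quadraticChar_neg_one_iff_not_isSquare.mpr
    rw [ZMod.exists_sq_eq_neg_one_iff]
    omega
  have hsum : ∑ x : ZMod p, χ (F x) = 0 := by
    have h1 : ∑ x : ZMod p, χ (F x) = ∑ x : ZMod p, χ (F (-x)) :=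
      Fintype.sum_equiv (Equiv.neg (ZMod p)) _ _ (fun x => by simp)
    have h2 : ∀ x : ZMod p, χ (F (-x)) = - χ (F x) := by
      intro x
      have : F (-x) = -1 * F x := by simp only [hF]; ring
      rw [this, map_mul, hneg1]; ring
    simp_rw [h2, Finset.sum_neg_distrib] at h1
    linarith
  rw [← Nat.card_coe_set_eq]
  have hce : Nat.card ↑{q : ZMod p × ZMod p |
      q.2 ^ 2 = q.1 * (q.1 ^ 2 - 4) * (q.1 ^ 2 - 1)}
      = Nat.card (Σ a : ZMod p, {b : ZMod p // b ^ 2 = F a}) :=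
    Nat.card_congr (Equiv.subtypeProdEquivSigmaSubtype (fun a b : ZMod p => b ^ 2 = F a))
  rw [hce, Nat.card_eq_fintype_card, Fintype.card_sigma]
  have hcard : ∀ x : ZMod p,
      (Fintype.card {y : ZMod p // y ^ 2 = F x} : ℤ) = χ (F x) + 1 := by
    intro x
    rw [← quadraticChar_card_sqrts hchar (F x)]
    congr 1
    rw [Set.toFinset_card]
    exact Fintype.card_congr (Equiv.refl _)
  have hz : (∑ x : ZMod p, (Fintype.card {y : ZMod p // y ^ 2 = F x} : ℤ)) = p := by
    simp_rw [hcard]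
    rw [Finset.sum_add_distrib, hsum]
    simp [ZMod.card]
  exact_mod_cast hz
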